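/- Optimality of the tailored behavior policy at each step (Behavior Policy Design): for every t ∈ {0,…,T−1} and state s ∈ 𝒮, the distribution ĥμ_t(·|s) minimizes, over all pmfs μ_t(·|s) satisfying the ĥΛ-support condition at (t,s) (i.e., μ_t(a|s) = 0 implies π^(k)_t(a|s) ĥq_{π^(k),t}(s,a) = 0 for all k,a), the objective Σ_{k=1}^K V(G^PDIS_k(τ^{μ_t, π^(k)_{t+1:T−1}}_{t:T−1}) | S_t = s), where the trajectory takes A_t ~ μ_t(·|s) and follows π^(k) at steps t+1,…,T−1, and G^PDIS_k(τ^{μ_t, π^(k)_{t+1:T−1}}_{t:T−1}) = (π^(k)_t(A_t|s)/μ_t(A_t|s)) Σ_{i=t}^{T−1} R_{i+1}. -/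
import Mathlib


open Finset

section RL

variable {S A : Type*}

/-- Expectation, over the random trajectory of length `h` generated from time `t` and state `s`
by the behavior policy `μ` in the MDP with transition kernel `p`, of a functional `f` of the
trajectory (recorded as the list of successive (action, next-state) pairs).  This is the finite
sum over all trajectories weighted by their probabilities; trajectories of zero probability
contribute `0`. -/
noncomputable def Etraj [Fintype S] [Fintype A] (p : S → A → S → ℝ)
    (μ : ℕ → S → A → ℝ) : ℕ → ℕ → S → (List (A × S) → ℝ) → ℝ
  | 0, _, _, f => f []
  | h + 1, t, s, f =>
      ∑ a : A, ∑ s' : S,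
        μ t s a * p s a s' * Etraj p μ h (t + 1) s' (fun l => f ((a, s') :: l))

/-- Total (undiscounted) reward `Σ_i R_{i+1}` along a trajectory starting from state `s`. -/
noncomputable def retF (r : S → A → ℝ) : S → List (A × S) → ℝ
  | _, [] => 0
  | s, (a, s') :: l => r s a + retF r s' l

/-- The PDIS return `G^PDIS(τ^{μ_{t:T-1}}_{t:T-1}) = Σ_i (∏_{j=t}^i ρ^{π,μ}_j) R_{i+1}` of a
trajectory starting at time `t` in state `s`, with target policy `π` and behavior policy `μ`,
in its recursive form. -/
noncomputable def pdisF (r : S → A → ℝ) (π μ : ℕ → S → A → ℝ) :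
    ℕ → S → List (A × S) → ℝ
  | _, _, [] => 0
  | t, s, (a, s') :: l => π t s a / μ t s a * (r s a + pdisF r π μ (t + 1) s' l)

/-- State value function `v_{π,t}(s) = E_π[Σ_{i=t+1}^T R_i | S_t = s]` for horizon `T`. -/
noncomputable def vval [Fintype S] [Fintype A] (p : S → A → S → ℝ) (r : S → A → ℝ)
    (π : ℕ → S → A → ℝ) (T t : ℕ) (s : S) : ℝ :=
  Etraj p π (T - t) t s (retF r s)

/-- Action value function `q_{π,t}(s,a) = E_π[Σ_{i=t+1}^T R_i | S_t = s, A_t = a]`. -/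
noncomputable def qval [Fintype S] [Fintype A] (p : S → A → S → ℝ) (r : S → A → ℝ)
    (π : ℕ → S → A → ℝ) (T t : ℕ) (s : S) (a : A) : ℝ :=
  r s a + ∑ s' : S, p s a s' * vval p r π T (t + 1) s'

/-- Conditional expectation `E[G^PDIS(τ^{μ_{t:T-1}}_{t:T-1}) | S_t = s]`. -/
noncomputable def Epdis [Fintype S] [Fintype A] (p : S → A → S → ℝ) (r : S → A → ℝ)
    (π μ : ℕ → S → A → ℝ) (T t : ℕ) (s : S) : ℝ :=
  Etraj p μ (T - t) t s (pdisF r π μ t s)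

/-- Conditional variance `V(G^PDIS(τ^{μ_{t:T-1}}_{t:T-1}) | S_t = s)`. -/
noncomputable def Vpdis [Fintype S] [Fintype A] (p : S → A → S → ℝ) (r : S → A → ℝ)
    (π μ : ℕ → S → A → ℝ) (T t : ℕ) (s : S) : ℝ :=
  Etraj p μ (T - t) t s (fun l => pdisF r π μ t s l ^ 2) - Epdis p r π μ T t s ^ 2

/-- `ν_{π,t}(s,a) = V_{S'~p(·|s,a)}(v_{π,t+1}(S'))` for `t ≤ T-2`, and `ν_{π,T-1}(s,a) = 0`. -/
noncomputable def nuval [Fintype S] [Fintype A] (p : S → A → S → ℝ) (r : S → A → ℝ)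
    (π : ℕ → S → A → ℝ) (T t : ℕ) (s : S) (a : A) : ℝ :=
  if t = T - 1 then 0
  else (∑ s' : S, p s a s' * vval p r π T (t + 1) s' ^ 2)
       - (∑ s' : S, p s a s' * vval p r π T (t + 1) s') ^ 2

/-- The variance-augmented action value `ĥq_{π,t}(s,a)`:
`ĥq_{π,T-1}(s,a) = q_{π,T-1}(s,a)²` and, for `t ≤ T-2`,
`ĥq_{π,t}(s,a) = q_{π,t}(s,a)² + ν_{π,t}(s,a) + Σ_{s'} p(s'|s,a) V(G^PDIS(τ^{π_{t+1:T-1}}) | S_{t+1}=s')`. -/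
noncomputable def hq [Fintype S] [Fintype A] (p : S → A → S → ℝ) (r : S → A → ℝ)
    (π : ℕ → S → A → ℝ) (T t : ℕ) (s : S) (a : A) : ℝ :=
  if t = T - 1 then qval p r π T t s a ^ 2
  else qval p r π T t s a ^ 2 + nuval p r π T t s a
       + ∑ s' : S, p s a s' * Vpdis p r π π T (t + 1) s'

/-- The tailored behavior policy `ĥμ_t(a|s) ∝ sqrt(Σ_k π^(k)_t(a|s)² ĥq_{π^(k),t}(s,a))`,
normalized over `a ∈ 𝒜` (uniform on `𝒜` if all the weights vanish). -/
noncomputable def hmu [Fintype S] [Fintype A] (p : S → A → S → ℝ) (r : S → A → ℝ)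
    (K : ℕ) (π : Fin K → ℕ → S → A → ℝ) (T t : ℕ) (s : S) (a : A) : ℝ :=
  if (∑ b : A, Real.sqrt (∑ k : Fin K, π k t s b ^ 2 * hq p r (π k) T t s b)) = 0 then
    (Fintype.card A : ℝ)⁻¹
  else
    Real.sqrt (∑ k : Fin K, π k t s a ^ 2 * hq p r (π k) T t s a) /
      ∑ b : A, Real.sqrt (∑ k : Fin K, π k t s b ^ 2 * hq p r (π k) T t s b)

/-- `w^(k)_t(s,a) = π^(k)_t(a|s)² ĥq_{π^(k),t}(s,a)`. -/
noncomputable def wRL [Fintype S] [Fintype A] (p : S → A → S → ℝ) (r : S → A → ℝ)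
    (K : ℕ) (π : Fin K → ℕ → S → A → ℝ) (T : ℕ) (k : Fin K) (t : ℕ) (s : S) (a : A) : ℝ :=
  π k t s a ^ 2 * hq p r (π k) T t s a

/-- `η^(k)_t(s,a) = w^(k)_t(s,a) / w̄_t(s,a)` with `w̄_t(s,a) = (1/K) Σ_j w^(j)_t(s,a)`. -/
noncomputable def etaRL [Fintype S] [Fintype A] (p : S → A → S → ℝ) (r : S → A → ℝ)
    (K : ℕ) (π : Fin K → ℕ → S → A → ℝ) (T : ℕ) (k : Fin K) (t : ℕ) (s : S) (a : A) : ℝ :=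
  wRL p r K π T k t s a / ((∑ j : Fin K, wRL p r K π T j t s a) / K)

/-- `η̲_t = min_{k,s,a} η^(k)_t(s,a)`. -/
noncomputable def etaLoRL [Fintype S] [Fintype A] (p : S → A → S → ℝ) (r : S → A → ℝ)
    (K : ℕ) (π : Fin K → ℕ → S → A → ℝ) (T t : ℕ) : ℝ :=
  ⨅ x : Fin K × S × A, etaRL p r K π T x.1 t x.2.1 x.2.2

/-- `η̄_t = max_{k,s,a} η^(k)_t(s,a)`. -/
noncomputable def etaHiRL [Fintype S] [Fintype A] (p : S → A → S → ℝ) (r : S → A → ℝ)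
    (K : ℕ) (π : Fin K → ℕ → S → A → ℝ) (T t : ℕ) : ℝ :=
  ⨆ x : Fin K × S × A, etaRL p r K π T x.1 t x.2.1 x.2.2

end RL

/-- Conditional variance `V(G^PDIS_k(τ^{μ_t, π_{t+1:T-1}}_{t:T-1}) | S_t = s)` of the mixed
estimator that takes `A_t ~ μ_t(·|s)` and then follows the target policy `π`, where
`G^PDIS_k = (π_t(A_t|s)/μ_t(A_t|s)) Σ_{i=t}^{T-1} R_{i+1}`. -/
noncomputable def Vmix {S A : Type*} [Fintype S] [Fintype A]
    (p : S → A → S → ℝ) (r : S → A → ℝ) (π : ℕ → S → A → ℝ)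
    (T t : ℕ) (s : S) (μt : A → ℝ) : ℝ :=
  (∑ a : A, ∑ s' : S, μt a * p s a s' *
      Etraj p π (T - (t + 1)) (t + 1) s'
        (fun l => (π t s a / μt a * (r s a + retF r s' l)) ^ 2))
  - (∑ a : A, ∑ s' : S, μt a * p s a s' *
      Etraj p π (T - (t + 1)) (t + 1) s'
        (fun l => π t s a / μt a * (r s a + retF r s' l))) ^ 2

section Aux

variable {S A : Type*} [Fintype S] [Fintype A]

lemma Etraj_congr (p : S → A → S → ℝ) (μ : ℕ → S → A → ℝ) (h t : ℕ) (s : S)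
    {f g : List (A × S) → ℝ} (hfg : ∀ l, f l = g l) :
    Etraj p μ h t s f = Etraj p μ h t s g := by
  rw [funext hfg]

lemma Etraj_smul (p : S → A → S → ℝ) (μ : ℕ → S → A → ℝ) (c : ℝ) :
    ∀ (h t : ℕ) (s : S) (f : List (A × S) → ℝ),
      Etraj p μ h t s (fun l => c * f l) = c * Etraj p μ h t s f
  | 0, t, s, f => rfl
  | h + 1, t, s, f => by
      simp only [Etraj, Finset.mul_sum]
      refine Finset.sum_congr rfl fun a _ => Finset.sum_congr rfl fun s' _ => ?_
      rw [Etraj_smul p μ c h (t + 1) s' (fun l => f ((a, s') :: l))]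
      ring

lemma Etraj_add (p : S → A → S → ℝ) (μ : ℕ → S → A → ℝ) :
    ∀ (h t : ℕ) (s : S) (f g : List (A × S) → ℝ),
      Etraj p μ h t s (fun l => f l + g l) = Etraj p μ h t s f + Etraj p μ h t s g
  | 0, t, s, f, g => rfl
  | h + 1, t, s, f, g => by
      simp only [Etraj, ← Finset.sum_add_distrib]
      refine Finset.sum_congr rfl fun a _ => Finset.sum_congr rfl fun s' _ => ?_
      rw [Etraj_add p μ h (t + 1) s' (fun l => f ((a, s') :: l)) (fun l => g ((a, s') :: l))]
      ring

lemma Etraj_const (p : S → A → S → ℝ) (μ : ℕ → S → A → ℝ)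
    (hp1 : ∀ s a, ∑ s' : S, p s a s' = 1) :
    ∀ (h t : ℕ) (s : S) (c : ℝ),
      (∀ t' s', t ≤ t' → t' < t + h → ∑ a : A, μ t' s' a = 1) →
      Etraj p μ h t s (fun _ => c) = c
  | 0, t, s, c, _ => rfl
  | h + 1, t, s, c, hμ1 => by
      have key : ∀ (a : A) (s' : S), Etraj p μ h (t + 1) s' (fun _ => c) = c := fun a s' =>
        Etraj_const p μ hp1 h (t + 1) s' c (fun t' s'' h1 h2 => hμ1 t' s'' (by omega) (by omega))
      simp only [Etraj]
      calc (∑ a : A, ∑ s' : S, μ t s a * p s a s' *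
              Etraj p μ h (t + 1) s' (fun _ => c))
          = ∑ a : A, ∑ s' : S, μ t s a * p s a s' * c :=
            Finset.sum_congr rfl fun a _ => Finset.sum_congr rfl fun s' _ => by rw [key a s']
        _ = ∑ a : A, μ t s a * c := by
            refine Finset.sum_congr rfl fun a _ => ?_
            rw [← Finset.sum_mul, ← Finset.mul_sum, hp1 s a, mul_one]
        _ = c := by rw [← Finset.sum_mul, hμ1 t s le_rfl (by omega), one_mul]

lemma weighted_jensen {ι : Type*} [Fintype ι] (w v : ι → ℝ) (hw0 : ∀ i, 0 ≤ w i)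
    (hw1 : ∑ i, w i = 1) : (∑ i, w i * v i) ^ 2 ≤ ∑ i, w i * v i ^ 2 := by
  have hcs := Finset.sum_mul_sq_le_sq_mul_sq Finset.univ
    (fun i => Real.sqrt (w i)) (fun i => Real.sqrt (w i) * v i)
  calc (∑ i, w i * v i) ^ 2
      = (∑ i, Real.sqrt (w i) * (Real.sqrt (w i) * v i)) ^ 2 := by
        congr 1
        exact Finset.sum_congr rfl fun i _ => by
          rw [← mul_assoc, Real.mul_self_sqrt (hw0 i)]
    _ ≤ (∑ i, Real.sqrt (w i) ^ 2) * ∑ i, (Real.sqrt (w i) * v i) ^ 2 := hcs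
    _ = ∑ i, w i * v i ^ 2 := by
        have h1 : (∑ i, Real.sqrt (w i) ^ 2) = 1 := by
          rw [← hw1]; exact Finset.sum_congr rfl fun i _ => Real.sq_sqrt (hw0 i)
        rw [h1, one_mul]
        exact Finset.sum_congr rfl fun i _ => by rw [mul_pow, Real.sq_sqrt (hw0 i)]

lemma Etraj_sq_le (p : S → A → S → ℝ) (μ : ℕ → S → A → ℝ)
    (hp0 : ∀ s a s', 0 ≤ p s a s') (hp1 : ∀ s a, ∑ s' : S, p s a s' = 1) :
    ∀ (h t : ℕ) (s : S) (f : List (A × S) → ℝ),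
      (∀ t' s', t ≤ t' → t' < t + h →
        (∀ a, 0 ≤ μ t' s' a) ∧ ∑ a : A, μ t' s' a = 1) →
      (Etraj p μ h t s f) ^ 2 ≤ Etraj p μ h t s (fun l => f l ^ 2)
  | 0, t, s, f, _ => le_refl _
  | h + 1, t, s, f, hμ1 => by
      have merge : ∀ g : A → S → ℝ, (∑ a : A, ∑ s' : S, g a s') = ∑ u : A × S, g u.1 u.2 :=
        fun g => (Fintype.sum_prod_type (fun u : A × S => g u.1 u.2)).symm
      have hw0 : ∀ u : A × S, 0 ≤ μ t s u.1 * p s u.1 u.2 :=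
        fun u => mul_nonneg ((hμ1 t s le_rfl (by omega)).1 _) (hp0 _ _ _)
      have hw1 : (∑ u : A × S, μ t s u.1 * p s u.1 u.2) = 1 := by
        rw [← merge (fun a s' => μ t s a * p s a s')]
        calc (∑ a : A, ∑ s' : S, μ t s a * p s a s')
            = ∑ a : A, μ t s a := Finset.sum_congr rfl fun a _ => by
              rw [← Finset.mul_sum, hp1 s a, mul_one]
          _ = 1 := (hμ1 t s le_rfl (by omega)).2
      simp only [Etraj]
      rw [merge (fun a s' => μ t s a * p s a s' *
            Etraj p μ h (t + 1) s' (fun l => f ((a, s') :: l))),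
          merge (fun a s' => μ t s a * p s a s' *
            Etraj p μ h (t + 1) s' (fun l => f ((a, s') :: l) ^ 2))]
      calc (∑ u : A × S, μ t s u.1 * p s u.1 u.2 *
              Etraj p μ h (t + 1) u.2 (fun l => f ((u.1, u.2) :: l))) ^ 2
          ≤ ∑ u : A × S, μ t s u.1 * p s u.1 u.2 *
              Etraj p μ h (t + 1) u.2 (fun l => f ((u.1, u.2) :: l)) ^ 2 :=
            weighted_jensen _ _ hw0 hw1
        _ ≤ ∑ u : A × S, μ t s u.1 * p s u.1 u.2 *
              Etraj p μ h (t + 1) u.2 (fun l => f ((u.1, u.2) :: l) ^ 2) := by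
            refine Finset.sum_le_sum fun u _ => mul_le_mul_of_nonneg_left ?_ (hw0 u)
            exact Etraj_sq_le p μ hp0 hp1 h (t + 1) u.2 (fun l => f ((u.1, u.2) :: l))
              (fun t' s'' h1 h2 => hμ1 t' s'' (by omega) (by omega))

end Aux
section Aux2

variable {S A : Type*} [Fintype S] [Fintype A]

lemma Etraj_pdisF (p : S → A → S → ℝ) (r : S → A → ℝ) (π : ℕ → S → A → ℝ) :
    ∀ (h t : ℕ) (s : S) (f : ℝ → ℝ),
      Etraj p π h t s (fun l => f (pdisF r π π t s l)) =
        Etraj p π h t s (fun l => f (retF r s l))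
  | 0, t, s, f => by simp only [Etraj, pdisF, retF]
  | h + 1, t, s, f => by
      simp only [Etraj]
      refine Finset.sum_congr rfl fun a _ => Finset.sum_congr rfl fun s' _ => ?_
      by_cases ha : π t s a = 0
      · simp [ha]
      · have h1 : ∀ l, pdisF r π π t s ((a, s') :: l)
            = r s a + pdisF r π π (t + 1) s' l := by
          intro l; simp [pdisF, div_self ha]
        have h2 : ∀ l : List (A × S), retF r s ((a, s') :: l) = r s a + retF r s' l :=
          fun l => rfl
        simp only [h1, h2]
        rw [Etraj_pdisF p r π h (t + 1) s' (fun x => f (r s a + x))]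

lemma Vpdis_eq (p : S → A → S → ℝ) (r : S → A → ℝ) (π : ℕ → S → A → ℝ) (T t : ℕ) (s : S) :
    Vpdis p r π π T t s =
      Etraj p π (T - t) t s (fun l => retF r s l ^ 2) - vval p r π T t s ^ 2 := by
  have h1 := Etraj_pdisF p r π (T - t) t s (fun x => x ^ 2)
  have h2 := Etraj_pdisF p r π (T - t) t s (fun x => x)
  unfold Vpdis Epdis vval
  rw [h1]
  congr 1
  exact congrArg (· ^ 2) h2

lemma Vpdis_nonneg (p : S → A → S → ℝ) (r : S → A → ℝ) (π : ℕ → S → A → ℝ)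
    (hp0 : ∀ s a s', 0 ≤ p s a s') (hp1 : ∀ s a, ∑ s' : S, p s a s' = 1)
    (T t : ℕ)
    (hπ : ∀ t' s', t' < T → (∀ a, 0 ≤ π t' s' a) ∧ ∑ a : A, π t' s' a = 1) (s : S) :
    0 ≤ Vpdis p r π π T t s := by
  rw [Vpdis_eq]
  have := Etraj_sq_le p π hp0 hp1 (T - t) t s (retF r s)
    (fun t' s'' h1 h2 => hπ t' s'' (by omega))
  unfold vval
  linarith

/-- second moment decomposition -/
lemma Etraj_sq_decomp (p : S → A → S → ℝ) (r : S → A → ℝ) (π : ℕ → S → A → ℝ)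
    (hp1 : ∀ s a, ∑ s' : S, p s a s' = 1)
    (T t : ℕ) (hπ1 : ∀ t' s', t' < T → ∑ a : A, π t' s' a = 1) (s' : S) (c : ℝ) :
    Etraj p π (T - (t + 1)) (t + 1) s' (fun l => (c + retF r s' l) ^ 2)
      = c ^ 2 + 2 * c * vval p r π T (t + 1) s'
        + (Vpdis p r π π T (t + 1) s' + vval p r π T (t + 1) s' ^ 2) := by
  have hcongr : ∀ l : List (A × S), (c + retF r s' l) ^ 2
      = (c ^ 2 + 2 * c * retF r s' l) + retF r s' l ^ 2 := fun l => by ring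
  rw [Etraj_congr p π _ _ _ hcongr, Etraj_add, Etraj_add,
    Etraj_const p π hp1 _ _ _ _ (fun t' s'' h1 h2 => hπ1 t' s'' (by omega)),
    Etraj_smul, Vpdis_eq]
  unfold vval
  ring

lemma sum_p_Etraj_sq (p : S → A → S → ℝ) (r : S → A → ℝ) (π : ℕ → S → A → ℝ)
    (hp1 : ∀ s a, ∑ s' : S, p s a s' = 1)
    (T t : ℕ) (ht : t < T) (hπ1 : ∀ t' s', t' < T → ∑ a : A, π t' s' a = 1)
    (s : S) (a : A) :
    ∑ s' : S, p s a s' * Etraj p π (T - (t + 1)) (t + 1) s'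
        (fun l => (r s a + retF r s' l) ^ 2)
      = hq p r π T t s a := by
  have hdec : ∀ s', Etraj p π (T - (t + 1)) (t + 1) s'
      (fun l => (r s a + retF r s' l) ^ 2)
      = r s a ^ 2 + 2 * r s a * vval p r π T (t + 1) s'
        + (Vpdis p r π π T (t + 1) s' + vval p r π T (t + 1) s' ^ 2) :=
    fun s' => Etraj_sq_decomp p r π hp1 T t hπ1 s' (r s a)
  have hLHS : ∑ s' : S, p s a s' * Etraj p π (T - (t + 1)) (t + 1) s'
        (fun l => (r s a + retF r s' l) ^ 2)
      = r s a ^ 2 + 2 * r s a * (∑ s' : S, p s a s' * vval p r π T (t + 1) s')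
        + ((∑ s' : S, p s a s' * Vpdis p r π π T (t + 1) s')
          + (∑ s' : S, p s a s' * vval p r π T (t + 1) s' ^ 2)) := by
    simp only [hdec]
    have e1 : ∀ s' : S, p s a s' * (r s a ^ 2 + 2 * r s a * vval p r π T (t + 1) s'
        + (Vpdis p r π π T (t + 1) s' + vval p r π T (t + 1) s' ^ 2))
        = p s a s' * r s a ^ 2 + 2 * r s a * (p s a s' * vval p r π T (t + 1) s')
          + (p s a s' * Vpdis p r π π T (t + 1) s'
            + p s a s' * vval p r π T (t + 1) s' ^ 2) := fun s' => by ring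
    simp only [e1, Finset.sum_add_distrib, ← Finset.sum_mul, ← Finset.mul_sum]
    rw [hp1 s a]
    ring
  by_cases hT1 : t = T - 1
  · have htT : t + 1 = T := by omega
    have hv : ∀ s' : S, vval p r π T (t + 1) s' = 0 := by
      intro s'; unfold vval; rw [htT, Nat.sub_self]; simp [Etraj, retF]
    have hV : ∀ s' : S, Vpdis p r π π T (t + 1) s' = 0 := by
      intro s'; unfold Vpdis Epdis; rw [htT, Nat.sub_self]; simp [Etraj, pdisF]
    rw [hLHS]
    unfold hq qval
    rw [if_pos hT1]
    simp [hv, hV]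
  · rw [hLHS]
    unfold hq qval nuval
    rw [if_neg hT1, if_neg hT1]
    ring

end Aux2
section Aux3

variable {S A : Type*} [Fintype S] [Fintype A]

lemma hq_ge (p : S → A → S → ℝ) (r : S → A → ℝ) (π : ℕ → S → A → ℝ)
    (hp0 : ∀ s a s', 0 ≤ p s a s') (hp1 : ∀ s a, ∑ s' : S, p s a s' = 1)
    (T t : ℕ)
    (hπ : ∀ t' s', t' < T → (∀ a, 0 ≤ π t' s' a) ∧ ∑ a : A, π t' s' a = 1)
    (s : S) (a : A) :
    qval p r π T t s a ^ 2 ≤ hq p r π T t s a := by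
  unfold hq
  by_cases hT1 : t = T - 1
  · rw [if_pos hT1]
  · rw [if_neg hT1]
    have hnu : 0 ≤ nuval p r π T t s a := by
      unfold nuval
      rw [if_neg hT1]
      have := weighted_jensen (fun s' => p s a s') (fun s' => vval p r π T (t + 1) s')
        (fun s' => hp0 s a s') (hp1 s a)
      linarith
    have hVs : 0 ≤ ∑ s' : S, p s a s' * Vpdis p r π π T (t + 1) s' :=
      Finset.sum_nonneg fun s' _ => mul_nonneg (hp0 s a s')
        (Vpdis_nonneg p r π hp0 hp1 T (t + 1) hπ s')
    linarith

lemma hq_nonneg (p : S → A → S → ℝ) (r : S → A → ℝ) (π : ℕ → S → A → ℝ)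
    (hp0 : ∀ s a s', 0 ≤ p s a s') (hp1 : ∀ s a, ∑ s' : S, p s a s' = 1)
    (T t : ℕ)
    (hπ : ∀ t' s', t' < T → (∀ a, 0 ≤ π t' s' a) ∧ ∑ a : A, π t' s' a = 1)
    (s : S) (a : A) :
    0 ≤ hq p r π T t s a :=
  le_trans (sq_nonneg _) (hq_ge p r π hp0 hp1 T t hπ s a)

lemma sum_p_Etraj_lin (p : S → A → S → ℝ) (r : S → A → ℝ) (π : ℕ → S → A → ℝ)
    (hp1 : ∀ s a, ∑ s' : S, p s a s' = 1)
    (T t : ℕ) (hπ1 : ∀ t' s', t' < T → ∑ a : A, π t' s' a = 1) (s : S) (a : A) :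
    ∑ s' : S, p s a s' * Etraj p π (T - (t + 1)) (t + 1) s'
        (fun l => r s a + retF r s' l)
      = qval p r π T t s a := by
  have hdec : ∀ s' : S, Etraj p π (T - (t + 1)) (t + 1) s'
      (fun l => r s a + retF r s' l) = r s a + vval p r π T (t + 1) s' := by
    intro s'
    rw [Etraj_add p π (T - (t + 1)) (t + 1) s' (fun _ => r s a) (retF r s'),
      Etraj_const p π hp1 _ _ _ _ (fun t' s'' h1 h2 => hπ1 t' s'' (by omega))]
    rfl
  simp only [hdec, mul_add, Finset.sum_add_distrib, ← Finset.sum_mul]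
  rw [hp1 s a, one_mul]
  rfl

/-- The key per-policy identity for the objective. -/
lemma Vmix_eq (p : S → A → S → ℝ) (r : S → A → ℝ) (π : ℕ → S → A → ℝ)
    (hp0 : ∀ s a s', 0 ≤ p s a s') (hp1 : ∀ s a, ∑ s' : S, p s a s' = 1)
    (T t : ℕ) (ht : t < T)
    (hπ : ∀ t' s', t' < T → (∀ a, 0 ≤ π t' s' a) ∧ ∑ a : A, π t' s' a = 1)
    (s : S) (μ : A → ℝ)
    (hsup : ∀ a, μ a = 0 → π t s a * hq p r π T t s a = 0) :
    Vmix p r π T t s μ =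
      (∑ a : A, π t s a ^ 2 * hq p r π T t s a / μ a)
        - (∑ a : A, π t s a * qval p r π T t s a) ^ 2 := by
  have hπ1 : ∀ t' s', t' < T → ∑ a : A, π t' s' a = 1 := fun t' s' h => (hπ t' s' h).2
  have hqge := fun a => hq_ge p r π hp0 hp1 T t hπ s a
  have hπq : ∀ a, μ a = 0 → π t s a * qval p r π T t s a = 0 := by
    intro a ha
    have h0 := hsup a ha
    have h1 : (π t s a * qval p r π T t s a) ^ 2 ≤ 0 := by
      have : π t s a ^ 2 * qval p r π T t s a ^ 2 ≤ π t s a ^ 2 * hq p r π T t s a :=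
        mul_le_mul_of_nonneg_left (hqge a) (sq_nonneg _)
      have h2 : π t s a ^ 2 * hq p r π T t s a = 0 := by
        have : π t s a ^ 2 * hq p r π T t s a
            = π t s a * (π t s a * hq p r π T t s a) := by ring
        rw [this, h0, mul_zero]
      nlinarith [sq_nonneg (π t s a * qval p r π T t s a)]
    exact pow_eq_zero_iff (n := 2) (by norm_num) |>.mp
      (le_antisymm h1 (sq_nonneg _))
  unfold Vmix
  congr 1
  · -- first term
    refine Finset.sum_congr rfl fun a _ => ?_
    by_cases ha : μ a = 0
    · have h2 : π t s a ^ 2 * hq p r π T t s a = 0 := by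
        have : π t s a ^ 2 * hq p r π T t s a
            = π t s a * (π t s a * hq p r π T t s a) := by ring
        rw [this, hsup a ha, mul_zero]
      simp [ha, h2]
    · have hrw : ∀ s' : S, Etraj p π (T - (t + 1)) (t + 1) s'
          (fun l => (π t s a / μ a * (r s a + retF r s' l)) ^ 2)
          = (π t s a / μ a) ^ 2 * Etraj p π (T - (t + 1)) (t + 1) s'
              (fun l => (r s a + retF r s' l) ^ 2) := by
        intro s'
        rw [← Etraj_smul p π ((π t s a / μ a) ^ 2) (T - (t + 1)) (t + 1) s'
          (fun l => (r s a + retF r s' l) ^ 2)]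
        exact Etraj_congr p π _ _ _ fun l => by ring
      calc (∑ s' : S, μ a * p s a s' * Etraj p π (T - (t + 1)) (t + 1) s'
              (fun l => (π t s a / μ a * (r s a + retF r s' l)) ^ 2))
          = μ a * (π t s a / μ a) ^ 2 * ∑ s' : S, p s a s' *
              Etraj p π (T - (t + 1)) (t + 1) s' (fun l => (r s a + retF r s' l) ^ 2) := by
            rw [Finset.mul_sum]
            exact Finset.sum_congr rfl fun s' _ => by rw [hrw s']; ring
        _ = π t s a ^ 2 * hq p r π T t s a / μ a := by
            rw [sum_p_Etraj_sq p r π hp1 T t ht hπ1 s a]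
            field_simp
  · -- second term
    congr 1
    refine Finset.sum_congr rfl fun a _ => ?_
    by_cases ha : μ a = 0
    · simp [ha, hπq a ha]
    · have hrw : ∀ s' : S, Etraj p π (T - (t + 1)) (t + 1) s'
          (fun l => π t s a / μ a * (r s a + retF r s' l))
          = (π t s a / μ a) * Etraj p π (T - (t + 1)) (t + 1) s'
              (fun l => r s a + retF r s' l) :=
        fun s' => Etraj_smul p π (π t s a / μ a) (T - (t + 1)) (t + 1) s'
          (fun l => r s a + retF r s' l)
      calc (∑ s' : S, μ a * p s a s' * Etraj p π (T - (t + 1)) (t + 1) s'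
              (fun l => π t s a / μ a * (r s a + retF r s' l)))
          = μ a * (π t s a / μ a) * ∑ s' : S, p s a s' *
              Etraj p π (T - (t + 1)) (t + 1) s' (fun l => r s a + retF r s' l) := by
            rw [Finset.mul_sum]
            exact Finset.sum_congr rfl fun s' _ => by rw [hrw s']; ring
        _ = π t s a * qval p r π T t s a := by
            rw [sum_p_Etraj_lin p r π hp1 T t hπ1 s a]
            field_simp

end Aux3
/-- optimality of the tailored behavior policy at each step (behavior policy
design): for every `t ∈ {0,…,T-1}` and state `s`, `ĥμ_t(·|s)` minimizes, over all pmfs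
`μ_t(·|s)` satisfying the `ĥΛ`-support condition at `(t,s)`, the summed conditional variance
`Σ_k V(G^PDIS_k(τ^{μ_t, π^(k)_{t+1:T-1}}_{t:T-1}) | S_t = s)`. -/
theorem stmt12 {S A : Type*} [Fintype S] [Fintype A] [Nonempty S] [Nonempty A]
    (p : S → A → S → ℝ) (r : S → A → ℝ)
    (hp0 : ∀ s a s', 0 ≤ p s a s') (hp1 : ∀ s a, ∑ s' : S, p s a s' = 1)
    (T : ℕ) (hT : 1 ≤ T)
    (K : ℕ) (π : Fin K → ℕ → S → A → ℝ)
    (hπ : ∀ k t s, t < T → (∀ a, 0 ≤ π k t s a) ∧ (∑ a : A, π k t s a = 1))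
    (t : ℕ) (ht : t < T) (s : S)
    (μt : A → ℝ) (hμt0 : ∀ a, 0 ≤ μt a) (hμt1 : ∑ a : A, μt a = 1)
    (hsupp : ∀ (a : A) (k : Fin K), μt a = 0 → π k t s a * hq p r (π k) T t s a = 0) :
    ∑ k : Fin K, Vmix p r (π k) T t s (fun a => hmu p r K π T t s a)
      ≤ ∑ k : Fin K, Vmix p r (π k) T t s μt := by
  classical
  set G : A → ℝ := fun a => ∑ k : Fin K, π k t s a ^ 2 * hq p r (π k) T t s a with hG
  set Z : ℝ := ∑ b : A, Real.sqrt (G b) with hZ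
  have hπk : ∀ (k : Fin K) t' s', t' < T →
      (∀ a, 0 ≤ π k t' s' a) ∧ ∑ a : A, π k t' s' a = 1 :=
    fun k t' s' h => hπ k t' s' h
  have hq0 : ∀ (k : Fin K) (a : A), 0 ≤ hq p r (π k) T t s a :=
    fun k a => hq_nonneg p r (π k) hp0 hp1 T t (hπk k) s a
  have hG0 : ∀ a, 0 ≤ G a :=
    fun a => Finset.sum_nonneg fun k _ => mul_nonneg (sq_nonneg _) (hq0 k a)
  have hmu_def : ∀ a, hmu p r K π T t s a
      = if Z = 0 then (Fintype.card A : ℝ)⁻¹ else Real.sqrt (G a) / Z := by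
    intro a; simp only [hmu, hZ, hG]
  -- the support condition lets us kill cross terms
  have hGsupp : ∀ (μ : A → ℝ),
      (∀ a (k : Fin K), μ a = 0 → π k t s a * hq p r (π k) T t s a = 0) →
      ∀ a, μ a = 0 → G a = 0 := by
    intro μ hs a ha
    rw [hG]
    refine Finset.sum_eq_zero fun k _ => ?_
    have : π k t s a ^ 2 * hq p r (π k) T t s a
        = π k t s a * (π k t s a * hq p r (π k) T t s a) := by ring
    rw [this, hs a k ha, mul_zero]
  -- key rewriting of the objective
  have key : ∀ μ : A → ℝ,
      (∀ a (k : Fin K), μ a = 0 → π k t s a * hq p r (π k) T t s a = 0) →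
      ∑ k : Fin K, Vmix p r (π k) T t s μ
        = (∑ a : A, G a / μ a)
          - ∑ k : Fin K, (∑ a : A, π k t s a * qval p r (π k) T t s a) ^ 2 := by
    intro μ hs
    have hVk : ∀ k : Fin K, Vmix p r (π k) T t s μ
        = (∑ a : A, π k t s a ^ 2 * hq p r (π k) T t s a / μ a)
          - (∑ a : A, π k t s a * qval p r (π k) T t s a) ^ 2 :=
      fun k => Vmix_eq p r (π k) hp0 hp1 T t ht (hπk k) s μ (fun a h0 => hs a k h0)
    rw [Finset.sum_congr rfl fun k _ => hVk k, Finset.sum_sub_distrib]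
    congr 1
    rw [Finset.sum_comm]
    refine Finset.sum_congr rfl fun a _ => ?_
    rw [hG, Finset.sum_div]
  -- support condition for hmu; also objective values
  by_cases hZ0 : Z = 0
  · -- everything vanishes
    have hGall : ∀ a, G a = 0 := by
      intro a
      have hsq : ∀ b ∈ Finset.univ, Real.sqrt (G b) = 0 :=
        (Finset.sum_eq_zero_iff_of_nonneg
          (fun b _ => Real.sqrt_nonneg (G b))).mp hZ0
      have := hsq a (Finset.mem_univ a)
      exact le_antisymm (Real.sqrt_eq_zero'.mp this) (hG0 a)
    have hsupp' : ∀ a (k : Fin K), hmu p r K π T t s a = 0 →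
        π k t s a * hq p r (π k) T t s a = 0 := by
      intro a k ha
      rw [hmu_def a, if_pos hZ0] at ha
      exact absurd ha (by positivity)
    rw [key _ hsupp', key μt hsupp]
    have hzero : ∀ μ : A → ℝ, (∑ a : A, G a / μ a) = 0 :=
      fun μ => Finset.sum_eq_zero fun a _ => by rw [hGall a, zero_div]
    rw [hzero, hzero]
  · have hZpos : 0 < Z :=
      lt_of_le_of_ne (Finset.sum_nonneg fun b _ => Real.sqrt_nonneg _) (Ne.symm hZ0)
    have hsupp' : ∀ a (k : Fin K), hmu p r K π T t s a = 0 →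
        π k t s a * hq p r (π k) T t s a = 0 := by
      intro a k ha
      rw [hmu_def a, if_neg hZ0, div_eq_zero_iff] at ha
      have hGa : G a = 0 := by
        rcases ha with ha | ha
        · exact le_antisymm (Real.sqrt_eq_zero'.mp ha) (hG0 a)
        · exact absurd ha hZ0
      simp only [hG] at hGa
      have hterm : π k t s a ^ 2 * hq p r (π k) T t s a = 0 :=
        (Finset.sum_eq_zero_iff_of_nonneg
          (fun j (_ : j ∈ Finset.univ) => mul_nonneg (sq_nonneg (π j t s a)) (hq0 j a))).mp
          hGa k (Finset.mem_univ k)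
      rcases mul_eq_zero.mp hterm with h | h
      · rw [pow_eq_zero_iff (by norm_num : 2 ≠ 0) |>.mp h, zero_mul]
      · rw [h, mul_zero]
    rw [key _ hsupp', key μt hsupp]
    refine sub_le_sub_right ?_ _
    -- LHS sum equals Z^2
    have hLHS : (∑ a : A, G a / hmu p r K π T t s a) = Z ^ 2 := by
      calc (∑ a : A, G a / hmu p r K π T t s a)
          = ∑ a : A, Z * Real.sqrt (G a) := by
            refine Finset.sum_congr rfl fun a _ => ?_
            rw [hmu_def a, if_neg hZ0, div_div_eq_mul_div, mul_comm (G a) Z,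
              mul_div_assoc, Real.div_sqrt]
        _ = Z * Z := by rw [← Finset.mul_sum, ← hZ]
        _ = Z ^ 2 := by ring
    rw [hLHS]
    -- Cauchy-Schwarz bound for the RHS
    have hGμ : ∀ a, μt a = 0 → G a = 0 := hGsupp μt hsupp
    have hZ_eq : Z = ∑ a : A, Real.sqrt (μt a) * Real.sqrt (G a / μt a) := by
      rw [hZ]
      refine Finset.sum_congr rfl fun a _ => ?_
      by_cases hμa : μt a = 0
      · simp [hμa, hGμ a hμa]
      · rw [← Real.sqrt_mul (hμt0 a), show μt a * (G a / μt a) = G a by field_simp]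
    have hcs := Finset.sum_mul_sq_le_sq_mul_sq Finset.univ
      (fun a => Real.sqrt (μt a)) (fun a => Real.sqrt (G a / μt a))
    calc Z ^ 2 = (∑ a : A, Real.sqrt (μt a) * Real.sqrt (G a / μt a)) ^ 2 := by
          rw [← hZ_eq]
      _ ≤ (∑ a : A, Real.sqrt (μt a) ^ 2) * ∑ a : A, Real.sqrt (G a / μt a) ^ 2 := hcs
      _ = ∑ a : A, G a / μt a := by
          rw [show (∑ a : A, Real.sqrt (μt a) ^ 2) = 1 by
            rw [← hμt1]; exact Finset.sum_congr rfl fun a _ => Real.sq_sqrt (hμt0 a),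
            one_mul]
          exact Finset.sum_congr rfl fun a _ =>
            Real.sq_sqrt (div_nonneg (hG0 a) (hμt0 a))
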